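/- arXiv:2203.12675 — 3 statements merged into one kernel-verified Lean document; each statement's English description precedes it below -/
import Mathlib

section
/- For every unit vector v ∈ ℝ^n, the excess kurtosis of the projection of the FMS mixture onto direction v satisfies E[⟨v, z⟩⁴] / (E[⟨v, z⟩²])² − 3 = (3/l)·((Σ_{j=1}^m α_j d_j²)/((Σ_{j=1}^m α_j d_j)²) − 1), where d_j := (1−γ) + γ·⟨v, q_j⟩² (note Σ_j α_j d_j ≥ 1−γ > 0, so the left-hand side is well defined). -/
open MeasureTheory ProbabilityTheory
open scoped RealInnerProductSpace

noncomputable section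

/-- Index type for the independent ingredients of the FMS sampler: the `n` coordinates of the
isotropic Gaussian vector `z₀`, the `l` Gaussian mixing scalars `z_1, …, z_l`, and the `l`
random indices `i_1, …, i_l`. -/
abbrev FMSIndex (n l : ℕ) := (Fin n) ⊕ (Fin l) ⊕ (Fin l)

/-- Codomains of the independent ingredients of the FMS sampler. -/
def FMSCodomain (n m l : ℕ) : FMSIndex n l → Type
  | Sum.inl _ => ℝ
  | Sum.inr (Sum.inl _) => ℝ
  | Sum.inr (Sum.inr _) => Fin m

instance FMSCodomain.instMeasurableSpace (n m l : ℕ) (k : FMSIndex n l) :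
    MeasurableSpace (FMSCodomain n m l k) := by
  rcases k with i | j | j
  · exact inferInstanceAs (MeasurableSpace ℝ)
  · exact inferInstanceAs (MeasurableSpace ℝ)
  · exact inferInstanceAs (MeasurableSpace (Fin m))

/-- The family consisting of the coordinates of `z₀`, the scalars `zs j`, and the indices
`idx j`, whose mutual independence is the independence assumption of the FMS setup. -/
def FMSFamily {n m l : ℕ} {Ω : Type*}
    (z₀ : Ω → EuclideanSpace ℝ (Fin n)) (zs : Fin l → Ω → ℝ)
    (idx : Fin l → Ω → Fin m) :
    ∀ k : FMSIndex n l, Ω → FMSCodomain n m l k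
  | Sum.inl i => fun ω => z₀ ω i
  | Sum.inr (Sum.inl j) => zs j
  | Sum.inr (Sum.inr j) => idx j


open Filter Real Set
open scoped NNReal ENNReal

namespace FMSAux


lemma integrable_gauss : Integrable (fun x : ℝ => Real.exp (-x ^ 2 / 2)) := by
  have h := integrable_exp_neg_mul_sq (show (0:ℝ) < 1/2 by norm_num)
  have e : (fun x : ℝ => Real.exp (-x ^ 2 / 2)) = fun x : ℝ => Real.exp (-(1/2) * x ^ 2) := by
    funext x; congr 1; ring
  rw [e]; exact h

lemma integrable_poly_gauss (k : ℕ) :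
    Integrable (fun x : ℝ => x ^ k * Real.exp (-x ^ 2 / 2)) := by
  have h := integrable_rpow_mul_exp_neg_mul_sq (b := (1/2:ℝ)) (by norm_num)
    (s := (k : ℝ)) (by exact_mod_cast neg_one_lt_zero.trans_le (Nat.cast_nonneg k))
  have e : (fun x : ℝ => x ^ k * Real.exp (-x ^ 2 / 2))
      = fun x : ℝ => x ^ (k : ℝ) * Real.exp (-(1/2) * x ^ 2) := by
    funext x; rw [Real.rpow_natCast]; congr 1; congr 1; ring
  rw [e]; exact h

lemma gauss_I0 : ∫ x : ℝ, Real.exp (-x ^ 2 / 2) = Real.sqrt (2 * π) := by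
  have h := integral_gaussian (1/2 : ℝ)
  have e : (fun x : ℝ => Real.exp (-x ^ 2 / 2)) = fun x : ℝ => Real.exp (-(1/2) * x ^ 2) := by
    funext x; congr 1; ring
  rw [e, h]; congr 1; ring

lemma gauss_deriv_exp (x : ℝ) : HasDerivAt (fun y : ℝ => Real.exp (-y ^ 2 / 2))
    (Real.exp (-x ^ 2 / 2) * (-x)) x := by
  have h2 : HasDerivAt (fun y : ℝ => -y ^ 2 / 2) (-x) x := by
    have := (hasDerivAt_pow 2 x).neg.div_const 2
    exact this.congr_deriv (by norm_num; ring)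
  exact h2.exp

lemma gauss_I1 : ∫ x : ℝ, x * Real.exp (-x ^ 2 / 2) = 0 := by
  have hder : ∀ x : ℝ, HasDerivAt (fun y : ℝ => -Real.exp (-y ^ 2 / 2))
      (x * Real.exp (-x ^ 2 / 2)) x := by
    intro x
    have := (gauss_deriv_exp x).neg
    exact this.congr_deriv (by ring)
  have h1 : Integrable (fun x : ℝ => x * Real.exp (-x ^ 2 / 2)) := by
    have := integrable_poly_gauss 1; simpa using this
  exact integral_eq_zero_of_hasDerivAt_of_integrable hder h1 integrable_gauss.neg

lemma gauss_rec (j : ℕ) : ∫ x : ℝ, x ^ (j + 2) * Real.exp (-x ^ 2 / 2)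
    = ((j : ℝ) + 1) * ∫ x : ℝ, x ^ j * Real.exp (-x ^ 2 / 2) := by
  have hder : ∀ x : ℝ, HasDerivAt (fun y : ℝ => -(y ^ (j + 1) * Real.exp (-y ^ 2 / 2)))
      (x ^ (j + 2) * Real.exp (-x ^ 2 / 2)
        - ((j : ℝ) + 1) * (x ^ j * Real.exp (-x ^ 2 / 2))) x := by
    intro x
    have h1 : HasDerivAt (fun y : ℝ => y ^ (j + 1)) (((j : ℝ) + 1) * x ^ j) x := by
      have := hasDerivAt_pow (j + 1) x
      simpa using this
    have := (h1.mul (gauss_deriv_exp x)).neg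
    exact this.congr_deriv (by ring)
  have hint2 := integrable_poly_gauss (j + 2)
  have hintj := integrable_poly_gauss j
  have hf' : Integrable (fun x : ℝ => x ^ (j + 2) * Real.exp (-x ^ 2 / 2)
      - ((j : ℝ) + 1) * (x ^ j * Real.exp (-x ^ 2 / 2))) :=
    hint2.sub (hintj.const_mul _)
  have hf : Integrable (fun x : ℝ => -(x ^ (j + 1) * Real.exp (-x ^ 2 / 2))) :=
    (integrable_poly_gauss (j + 1)).neg
  have h0 := integral_eq_zero_of_hasDerivAt_of_integrable hder hf' hf
  rw [integral_sub hint2 (hintj.const_mul _), integral_const_mul] at h0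
  linarith

lemma gauss_I2 : ∫ x : ℝ, x ^ 2 * Real.exp (-x ^ 2 / 2) = Real.sqrt (2 * π) := by
  have := gauss_rec 0
  simpa [gauss_I0] using this

lemma gauss_I3 : ∫ x : ℝ, x ^ 3 * Real.exp (-x ^ 2 / 2) = 0 := by
  have := gauss_rec 1
  simp only [pow_one] at this
  rw [show (1:ℕ) + 2 = 3 from rfl] at this
  rw [this, gauss_I1]
  ring

lemma gauss_I4 : ∫ x : ℝ, x ^ 4 * Real.exp (-x ^ 2 / 2) = 3 * Real.sqrt (2 * π) := by
  have := gauss_rec 2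
  rw [show (2:ℕ) + 2 = 4 from rfl] at this
  rw [this, gauss_I2]
  norm_num

lemma pdf01 (x : ℝ) : gaussianPDFReal 0 1 x = (Real.sqrt (2 * π))⁻¹ * Real.exp (-x ^ 2 / 2) := by
  simp [gaussianPDFReal]

lemma integral_gaussianReal_eq (g : ℝ → ℝ) :
    ∫ x, g x ∂(gaussianReal 0 1) = ∫ x, gaussianPDFReal 0 1 x * g x := by
  rw [gaussianReal_of_var_ne_zero 0 one_ne_zero]
  rw [show gaussianPDF 0 1
      = fun x => (((fun y => Real.toNNReal (gaussianPDFReal 0 1 y)) x : ℝ≥0) : ℝ≥0∞) from rfl]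
  rw [integral_withDensity_eq_integral_smul (measurable_gaussianPDFReal 0 1).real_toNNReal g]
  congr 1
  funext x
  rw [NNReal.smul_def, Real.coe_toNNReal _ (gaussianPDFReal_nonneg 0 1 x), smul_eq_mul]

lemma integrable_pow_gaussianReal (k : ℕ) :
    Integrable (fun x : ℝ => x ^ k) (gaussianReal 0 1) := by
  rw [gaussianReal_of_var_ne_zero 0 one_ne_zero]
  rw [show gaussianPDF 0 1
      = fun x => (((fun y => Real.toNNReal (gaussianPDFReal 0 1 y)) x : ℝ≥0) : ℝ≥0∞) from rfl]
  rw [integrable_withDensity_iff_integrable_smul (measurable_gaussianPDFReal 0 1).real_toNNReal]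
  have e : (fun x : ℝ => (Real.toNNReal (gaussianPDFReal 0 1 x)) • (x ^ k))
      = fun x : ℝ => (Real.sqrt (2 * π))⁻¹ * (x ^ k * Real.exp (-x ^ 2 / 2)) := by
    funext x
    rw [NNReal.smul_def, Real.coe_toNNReal _ (gaussianPDFReal_nonneg 0 1 x), smul_eq_mul, pdf01]
    ring
  rw [e]
  exact (integrable_poly_gauss k).const_mul _

lemma integral_pow_gaussianReal (k : ℕ) :
    ∫ x, x ^ k ∂(gaussianReal 0 1)
      = (Real.sqrt (2 * π))⁻¹ * ∫ x : ℝ, x ^ k * Real.exp (-x ^ 2 / 2) := by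
  rw [integral_gaussianReal_eq]
  rw [show (fun x : ℝ => gaussianPDFReal 0 1 x * x ^ k)
      = fun x : ℝ => (Real.sqrt (2 * π))⁻¹ * (x ^ k * Real.exp (-x ^ 2 / 2)) from
    funext fun x => by rw [pdf01]; ring]
  rw [integral_const_mul]

lemma sqrt_two_pi_pos : 0 < Real.sqrt (2 * π) := Real.sqrt_pos.mpr (by positivity)

lemma gaussianReal_mom1 : ∫ x, x ∂(gaussianReal 0 1) = 0 := by
  have := integral_pow_gaussianReal 1
  simpa [gauss_I1] using this

lemma gaussianReal_mom2 : ∫ x, x ^ 2 ∂(gaussianReal 0 1) = 1 := by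
  rw [integral_pow_gaussianReal 2, gauss_I2, inv_mul_cancel₀ sqrt_two_pi_pos.ne']

lemma gaussianReal_mom3 : ∫ x, x ^ 3 ∂(gaussianReal 0 1) = 0 := by
  rw [integral_pow_gaussianReal 3, gauss_I3, mul_zero]

lemma gaussianReal_mom4 : ∫ x, x ^ 4 ∂(gaussianReal 0 1) = 3 := by
  rw [integral_pow_gaussianReal 4, gauss_I4]
  rw [show (Real.sqrt (2 * π))⁻¹ * (3 * Real.sqrt (2 * π))
      = 3 * ((Real.sqrt (2 * π))⁻¹ * Real.sqrt (2 * π)) by ring,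
    inv_mul_cancel₀ sqrt_two_pi_pos.ne', mul_one]



variable {Ω : Type*} [MeasurableSpace Ω] {P : Measure Ω}

lemma integrable_pow_le [IsProbabilityMeasure P] {f : Ω → ℝ}
    (hm : AEStronglyMeasurable f P) (h4 : Integrable (fun ω => f ω ^ 4) P)
    {k : ℕ} (hk : k ≤ 4) : Integrable (fun ω => f ω ^ k) P := by
  refine Integrable.mono' ((integrable_const (1:ℝ)).add h4) ?_ ?_
  · exact (hm.aemeasurable.pow_const k).aestronglyMeasurable
  · refine Filter.Eventually.of_forall fun ω => ?_
    have h40 : (0:ℝ) ≤ f ω ^ 4 := by positivity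
    rw [Real.norm_eq_abs, abs_pow]
    simp only [Pi.add_apply]
    rcases le_total |f ω| 1 with h | h
    · have : |f ω| ^ k ≤ 1 := pow_le_one₀ (abs_nonneg _) h
      linarith
    · have h1 : |f ω| ^ k ≤ |f ω| ^ 4 := pow_le_pow_right₀ h hk
      have h2 : |f ω| ^ 4 = f ω ^ 4 := by
        rw [← abs_pow, abs_of_nonneg h40]
      linarith [h1, h2.le]

lemma iIndepFun_congr_ae {ι : Type*} {β : ι → Type*} {mβ : ∀ i, MeasurableSpace (β i)}
    {f g : ∀ i, Ω → β i} (h : iIndepFun (m := mβ) f P) (hfg : ∀ i, f i =ᵐ[P] g i) :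
    iIndepFun (m := mβ) g P := by
  rw [iIndepFun_iff_measure_inter_preimage_eq_mul] at h ⊢
  intro S sets hsets
  have hset : ∀ i, f i ⁻¹' sets i =ᵐ[P] g i ⁻¹' sets i := fun i =>
    Filter.eventuallyEq_set.mpr ((hfg i).mono fun ω hω => by
      simp only [Set.mem_preimage, hω])
  have h1 : P (⋂ i ∈ S, g i ⁻¹' sets i) = P (⋂ i ∈ S, f i ⁻¹' sets i) := by
    refine measure_congr (Filter.eventuallyEq_set.mpr ?_)
    have hall : ∀ᵐ ω ∂P, ∀ i ∈ (S : Set ι), (ω ∈ f i ⁻¹' sets i ↔ ω ∈ g i ⁻¹' sets i) := by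
      rw [MeasureTheory.ae_ball_iff S.countable_toSet]
      intro i _
      exact (hfg i).mono fun ω hω => by simp only [Set.mem_preimage, hω]
    refine hall.mono fun ω hω => ?_
    simp only [Set.mem_iInter]
    constructor
    · intro hmem i hi; exact (hω i (Finset.mem_coe.mpr hi)).mpr (hmem i hi)
    · intro hmem i hi; exact (hω i (Finset.mem_coe.mpr hi)).mp (hmem i hi)
  rw [h1, h S hsets]
  exact Finset.prod_congr rfl fun i _ => measure_congr (hset i)

/-- Measurable modification of a discrete random "index" whose fibers have prescribed
outer measures summing to one. -/
lemma exists_measurable_discrete {m : ℕ} (hm : 0 < m) [IsProbabilityMeasure P]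
    (f : Ω → Fin m) (α : Fin m → ℝ) (hα0 : ∀ k, 0 ≤ α k) (hα1 : ∀ k, α k ≤ 1)
    (hαsum : ∑ k, α k = 1)
    (hf : ∀ k, P {ω | f ω = k} = ENNReal.ofReal (α k)) :
    ∃ g : Ω → Fin m, Measurable g ∧ f =ᵐ[P] g := by
  classical
  set S : Fin m → Set Ω := fun k => {ω | f ω = k} with hS
  set H : Fin m → Set Ω := fun k => toMeasurable P (S k) with hH
  have hHmeas : ∀ k, MeasurableSet (H k) := fun k => measurableSet_toMeasurable _ _
  have hHval : ∀ k, P (H k) = ENNReal.ofReal (α k) := fun k => by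
    rw [hH, measure_toMeasurable, hf k]
  set G : Fin m → Set Ω := fun k => ⋃ k' ∈ Finset.univ.erase k, H k' with hG
  have hGmeas : ∀ k, MeasurableSet (G k) := fun k =>
    (Finset.univ.erase k).measurableSet_biUnion fun k' _ => hHmeas k'
  set B : Fin m → Set Ω := fun k => (G k)ᶜ with hB
  have hBmeas : ∀ k, MeasurableSet (B k) := fun k => (hGmeas k).compl
  have hBsub : ∀ k, B k ⊆ S k := by
    intro k ω hω
    by_contra hne
    have h2 : f ω ≠ k := hne
    have hmemG : ω ∈ G k := by
      refine Set.mem_iUnion₂.mpr ⟨f ω, ?_, subset_toMeasurable _ _ rfl⟩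
      exact Finset.mem_erase.mpr ⟨h2, Finset.mem_univ _⟩
    exact hω hmemG
  have hGle : ∀ k, P (G k) ≤ ENNReal.ofReal (1 - α k) := by
    intro k
    calc P (G k) ≤ ∑ k' ∈ Finset.univ.erase k, P (H k') := measure_biUnion_finset_le _ _
    _ = ∑ k' ∈ Finset.univ.erase k, ENNReal.ofReal (α k') := by
        exact Finset.sum_congr rfl fun k' _ => hHval k'
    _ = ENNReal.ofReal (∑ k' ∈ Finset.univ.erase k, α k') := by
        rw [ENNReal.ofReal_sum_of_nonneg fun k' _ => hα0 k']
    _ = ENNReal.ofReal (1 - α k) := by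
        rw [Finset.sum_erase_eq_sub (Finset.mem_univ k), hαsum]
  have hBge : ∀ k, ENNReal.ofReal (α k) ≤ P (B k) := by
    intro k
    rw [hB, prob_compl_eq_one_sub (hGmeas k)]
    have h1 : ENNReal.ofReal (α k) = 1 - ENNReal.ofReal (1 - α k) := by
      rw [show (1:ℝ≥0∞) = ENNReal.ofReal 1 by simp, ← ENNReal.ofReal_sub _ (by linarith [hα1 k])]
      norm_num
    rw [h1]
    exact tsub_le_tsub_left (hGle k) 1
  have hBS : ∀ k, S k =ᵐ[P] B k := by
    intro k
    have hBH : B k ⊆ H k := (hBsub k).trans (subset_toMeasurable _ _)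
    have hPB : P (B k) = ENNReal.ofReal (α k) := by
      refine le_antisymm ?_ (hBge k)
      rw [← hHval k]
      exact measure_mono hBH
    have hdiff : P (H k \ B k) = 0 := by
      rw [measure_diff hBH (hBmeas k).nullMeasurableSet (by rw [hPB]; exact ENNReal.ofReal_ne_top),
        hPB, hHval k, tsub_self]
    rw [MeasureTheory.ae_eq_set]
    constructor
    · refine measure_mono_null ?_ hdiff
      intro ω hω
      exact ⟨subset_toMeasurable _ _ hω.1, hω.2⟩
    · have : B k \ S k = ∅ := Set.diff_eq_empty.mpr (hBsub k)
      rw [this]; exact measure_empty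
  -- define the measurable modification
  set e : Ω → ℕ := fun ω => ∑ k : Fin m, (k : ℕ) * (B k).indicator (fun _ => 1) ω with he
  have hemeas : Measurable e := by
    refine Finset.measurable_sum _ fun k _ => ?_
    exact (measurable_const.indicator (hBmeas k)).const_mul _
  set g : Ω → Fin m := fun ω => if h : e ω < m then (⟨e ω, h⟩ : Fin m) else ⟨0, hm⟩ with hg
  refine ⟨g, ?_, ?_⟩
  · have : g = (fun n => if h : n < m then (⟨n, h⟩ : Fin m) else ⟨0, hm⟩) ∘ e := rfl
    rw [this]
    exact (measurable_of_countable _).comp hemeas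
  · have hall : ∀ᵐ ω ∂P, ∀ k, S k ω = B k ω := ae_all_iff.mpr fun k => hBS k
    refine hall.mono fun ω hω => ?_
    have hmem : ω ∈ B (f ω) := (iff_of_eq (hω (f ω))).mp rfl
    have hnot : ∀ k, k ≠ f ω → ω ∉ B k := by
      intro k hk hBk
      have : ω ∈ S k := (iff_of_eq (hω k)).mpr hBk
      exact hk (Eq.symm this)
    have heval : e ω = (f ω : ℕ) := by
      have h0 : e ω = ∑ k : Fin m, (k : ℕ) * (B k).indicator (fun _ => 1) ω := rfl
      have hsingle : ∑ k : Fin m, (k : ℕ) * (B k).indicator (fun _ => 1) ω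
          = (f ω : ℕ) * (B (f ω)).indicator (fun _ => 1) ω :=
        Finset.sum_eq_single_of_mem _ (Finset.mem_univ _)
          (fun k _ hk => by rw [Set.indicator_of_notMem (hnot k hk), mul_zero])
      rw [h0, hsingle, Set.indicator_of_mem hmem, mul_one]
    have hgω : g ω = if h : e ω < m then (⟨e ω, h⟩ : Fin m) else ⟨0, hm⟩ := rfl
    rw [hgω]
    simp only [heval]
    rw [dif_pos (f ω).isLt]

lemma moment_from_map {f : Ω → ℝ} (hf : Measurable f)
    (hmap : Measure.map f P = gaussianReal 0 1) (k : ℕ) :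
    ∫ ω, f ω ^ k ∂P = ∫ x, x ^ k ∂(gaussianReal 0 1) := by
  have hsm : AEStronglyMeasurable (fun x : ℝ => x ^ k) (Measure.map f P) :=
    (measurable_id.pow_const k).aestronglyMeasurable
  rw [← hmap, integral_map hf.aemeasurable hsm]

lemma integrable_pow4_from_map {f : Ω → ℝ} (hf : Measurable f)
    (hmap : Measure.map f P = gaussianReal 0 1) :
    Integrable (fun ω => f ω ^ 4) P := by
  have h := integrable_pow_gaussianReal 4
  rw [← hmap] at h
  have hsm : AEStronglyMeasurable (fun x : ℝ => x ^ 4) (Measure.map f P) :=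
    (measurable_id.pow_const 4).aestronglyMeasurable
  exact (integrable_map_measure hsm hf.aemeasurable).mp h

lemma discrete_moment {m : ℕ} [IsProbabilityMeasure P] {g : Ω → Fin m} (hg : Measurable g)
    {α : Fin m → ℝ} (hα0 : ∀ k, 0 ≤ α k)
    (hprob : ∀ k, P (g ⁻¹' {k}) = ENNReal.ofReal (α k)) (u : Fin m → ℝ) :
    ∫ ω, u (g ω) ∂P = ∑ k, α k * u k := by
  have hsm : AEStronglyMeasurable u (Measure.map g P) :=
    (measurable_of_countable u).aestronglyMeasurable
  have h1 : ∫ ω, u (g ω) ∂P = ∫ x, u x ∂(Measure.map g P) :=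
    (integral_map hg.aemeasurable hsm).symm
  haveI : IsProbabilityMeasure (Measure.map g P) := Measure.isProbabilityMeasure_map hg.aemeasurable
  rw [h1, integral_fintype (Integrable.of_finite)]
  refine Finset.sum_congr rfl fun k _ => ?_
  rw [measureReal_def, Measure.map_apply hg (measurableSet_singleton k), hprob k,
    ENNReal.toReal_ofReal (hα0 k), smul_eq_mul]

lemma discrete_integrable {m : ℕ} [IsProbabilityMeasure P] {g : Ω → Fin m}
    (hg : Measurable g) (u : Fin m → ℝ) :
    Integrable (fun ω => u (g ω)) P := by
  haveI : IsProbabilityMeasure (Measure.map g P) := Measure.isProbabilityMeasure_map hg.aemeasurable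
  have hsm : AEStronglyMeasurable u (Measure.map g P) :=
    (measurable_of_countable u).aestronglyMeasurable
  exact (integrable_map_measure hsm hg.aemeasurable).mp (Integrable.of_finite)

/-- Second and fourth moments of a finite sum of independent centered random variables with
vanishing first and third moments. -/
lemma sum_indep_moments {ι : Type*} [DecidableEq ι] [IsProbabilityMeasure P] (X : ι → Ω → ℝ)
    (hmeas : ∀ i, Measurable (X i))
    (hpair : ∀ (s : Finset ι) (i : ι), i ∉ s →
      IndepFun (X i) (fun ω => ∑ j ∈ s, X j ω) P)
    (h4 : ∀ i, Integrable (fun ω => X i ω ^ 4) P)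
    (h1 : ∀ i, ∫ ω, X i ω ∂P = 0) (h3 : ∀ i, ∫ ω, X i ω ^ 3 ∂P = 0)
    (s : Finset ι) :
    Integrable (fun ω => (∑ i ∈ s, X i ω) ^ 4) P ∧
    (∫ ω, (∑ i ∈ s, X i ω) ∂P = 0) ∧
    (∫ ω, (∑ i ∈ s, X i ω) ^ 2 ∂P = ∑ i ∈ s, ∫ ω, X i ω ^ 2 ∂P) ∧
    (∫ ω, (∑ i ∈ s, X i ω) ^ 3 ∂P = 0) ∧
    (∫ ω, (∑ i ∈ s, X i ω) ^ 4 ∂P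
      = ∑ i ∈ s, (∫ ω, X i ω ^ 4 ∂P)
        + 3 * ((∑ i ∈ s, ∫ ω, X i ω ^ 2 ∂P) ^ 2 - ∑ i ∈ s, (∫ ω, X i ω ^ 2 ∂P) ^ 2)) := by
  classical
  induction s using Finset.induction_on with
  | empty => simp
  | @insert i s hi ih =>
    obtain ⟨ihInt, ihE1, ihE2, ihE3, ihE4⟩ := ih
    set Y : Ω → ℝ := X i with hY
    set T : Ω → ℝ := fun ω => ∑ j ∈ s, X j ω with hT
    have hTmeas : Measurable T := Finset.measurable_sum s fun j _ => hmeas j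
    have hYT : IndepFun Y T P := hpair s i hi
    -- integrability of powers
    have hIY : ∀ k, k ≤ 4 → Integrable (fun ω => Y ω ^ k) P := fun k hk =>
      integrable_pow_le (hmeas i).aestronglyMeasurable (h4 i) hk
    have hIT : ∀ k, k ≤ 4 → Integrable (fun ω => T ω ^ k) P := fun k hk =>
      integrable_pow_le hTmeas.aestronglyMeasurable ihInt hk
    -- independence of powers and product formulas
    have hIndPow : ∀ p q : ℕ, IndepFun (fun ω => Y ω ^ p) (fun ω => T ω ^ q) P := fun p q =>
      hYT.comp (measurable_id.pow_const p) (measurable_id.pow_const q)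
    have hIprod : ∀ p q : ℕ, p ≤ 4 → q ≤ 4 →
        Integrable (fun ω => Y ω ^ p * T ω ^ q) P := by
      intro p q hp hq
      have := (hIndPow p q).integrable_mul (hIY p hp) (hIT q hq)
      exact this
    have hEprod : ∀ p q : ℕ, p ≤ 4 → q ≤ 4 →
        ∫ ω, Y ω ^ p * T ω ^ q ∂P = (∫ ω, Y ω ^ p ∂P) * ∫ ω, T ω ^ q ∂P := by
      intro p q hp hq
      have := (hIndPow p q).integral_mul_eq_mul_integral (hIY p hp).aestronglyMeasurable (hIT q hq).aestronglyMeasurable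
      exact this
    -- some first moments
    have hEY1 : ∫ ω, Y ω ∂P = 0 := h1 i
    have hEY3 : ∫ ω, Y ω ^ 3 ∂P = 0 := h3 i
    have hET1 : ∫ ω, T ω ∂P = 0 := ihE1
    have hET3 : ∫ ω, T ω ^ 3 ∂P = 0 := ihE3
    have hE_YT : ∫ ω, Y ω * T ω ∂P = 0 := by
      have := hEprod 1 1 (by norm_num) (by norm_num)
      simp only [pow_one] at this
      rw [this, hEY1, zero_mul]
    have hE_Y3T : ∫ ω, Y ω ^ 3 * T ω ∂P = 0 := by
      have := hEprod 3 1 (by norm_num) (by norm_num)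
      simp only [pow_one] at this
      rw [this, hEY3, zero_mul]
    have hE_YT3 : ∫ ω, Y ω * T ω ^ 3 ∂P = 0 := by
      have := hEprod 1 3 (by norm_num) (by norm_num)
      simp only [pow_one] at this
      rw [this, hET3, mul_zero]
    have hE_Y2T : ∫ ω, Y ω ^ 2 * T ω ∂P = 0 := by
      have := hEprod 2 1 (by norm_num) (by norm_num)
      simp only [pow_one] at this
      rw [this, hET1, mul_zero]
    have hE_YT2 : ∫ ω, Y ω * T ω ^ 2 ∂P = 0 := by
      have := hEprod 1 2 (by norm_num) (by norm_num)
      simp only [pow_one] at this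
      rw [this, hEY1, zero_mul]
    have hE_Y2T2 : ∫ ω, Y ω ^ 2 * T ω ^ 2 ∂P
        = (∫ ω, Y ω ^ 2 ∂P) * ∫ ω, T ω ^ 2 ∂P :=
      hEprod 2 2 (by norm_num) (by norm_num)
    -- rewrite the inserted sum
    have hsum : ∀ ω, (∑ j ∈ insert i s, X j ω) = Y ω + T ω := fun ω =>
      Finset.sum_insert hi
    -- integrability of the fourth power of the new sum
    have hInt4' : Integrable (fun ω => (Y ω + T ω) ^ 4) P := by
      have hfun : (fun ω => (Y ω + T ω) ^ 4)
          = fun ω => Y ω ^ 4 + (4 * (Y ω ^ 3 * T ω) + (6 * (Y ω ^ 2 * T ω ^ 2)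
            + (4 * (Y ω * T ω ^ 3) + T ω ^ 4))) := by
        funext ω; ring
      rw [hfun]
      have i31 : Integrable (fun ω => Y ω ^ 3 * T ω) P := by
        simpa using hIprod 3 1 (by norm_num) (by norm_num)
      have i13 : Integrable (fun ω => Y ω * T ω ^ 3) P := by
        simpa using hIprod 1 3 (by norm_num) (by norm_num)
      have a1 : Integrable (fun ω => 4 * (Y ω * T ω ^ 3) + T ω ^ 4) P :=
        (i13.const_mul 4).add (hIT 4 le_rfl)
      have a2 : Integrable (fun ω => 6 * (Y ω ^ 2 * T ω ^ 2)
          + (4 * (Y ω * T ω ^ 3) + T ω ^ 4)) P :=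
        ((hIprod 2 2 (by norm_num) (by norm_num)).const_mul 6).add a1
      have a3 : Integrable (fun ω => 4 * (Y ω ^ 3 * T ω) + (6 * (Y ω ^ 2 * T ω ^ 2)
          + (4 * (Y ω * T ω ^ 3) + T ω ^ 4))) P :=
        (i31.const_mul 4).add a2
      exact (hIY 4 le_rfl).add a3
    have goalInt : Integrable (fun ω => (∑ j ∈ insert i s, X j ω) ^ 4) P := by
      have : (fun ω => (∑ j ∈ insert i s, X j ω) ^ 4) = fun ω => (Y ω + T ω) ^ 4 := by
        funext ω; rw [hsum ω]
      rw [this]; exact hInt4'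
    -- plain integrabilities
    have hIY1 : Integrable Y P := by simpa using hIY 1 (by norm_num)
    have hIT1 : Integrable T P := by simpa using hIT 1 (by norm_num)
    have hIprod11 : Integrable (fun ω => Y ω * T ω) P := by
      simpa using hIprod 1 1 (by norm_num) (by norm_num)
    have hIprodY2T : Integrable (fun ω => Y ω ^ 2 * T ω) P := by
      simpa using hIprod 2 1 (by norm_num) (by norm_num)
    have hIprodYT2 : Integrable (fun ω => Y ω * T ω ^ 2) P := by
      simpa using hIprod 1 2 (by norm_num) (by norm_num)
    have hIprodY3T : Integrable (fun ω => Y ω ^ 3 * T ω) P := by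
      simpa using hIprod 3 1 (by norm_num) (by norm_num)
    have hIprodYT3 : Integrable (fun ω => Y ω * T ω ^ 3) P := by
      simpa using hIprod 1 3 (by norm_num) (by norm_num)
    have hIprodY2T2 : Integrable (fun ω => Y ω ^ 2 * T ω ^ 2) P :=
      hIprod 2 2 (by norm_num) (by norm_num)
    -- first moment
    have goalE1 : ∫ ω, (∑ j ∈ insert i s, X j ω) ∂P = 0 := by
      have e : (fun ω => ∑ j ∈ insert i s, X j ω) = fun ω => Y ω + T ω := funext hsum
      rw [e, integral_add hIY1 hIT1, hEY1, hET1, add_zero]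
    -- second moment
    have E2' : ∫ ω, (Y ω + T ω) ^ 2 ∂P = (∫ ω, Y ω ^ 2 ∂P) + ∫ ω, T ω ^ 2 ∂P := by
      have hfun : (fun ω => (Y ω + T ω) ^ 2)
          = fun ω => Y ω ^ 2 + (2 * (Y ω * T ω) + T ω ^ 2) := by funext ω; ring
      have b1 : Integrable (fun ω => 2 * (Y ω * T ω) + T ω ^ 2) P :=
        (hIprod11.const_mul 2).add (hIT 2 (by norm_num))
      have b2 : Integrable (fun ω => 2 * (Y ω * T ω)) P := hIprod11.const_mul 2
      rw [hfun, integral_add (hIY 2 (by norm_num)) b1, integral_add b2 (hIT 2 (by norm_num)),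
        integral_const_mul, hE_YT]
      ring
    have goalE2 : ∫ ω, (∑ j ∈ insert i s, X j ω) ^ 2 ∂P
        = ∑ j ∈ insert i s, ∫ ω, X j ω ^ 2 ∂P := by
      have e : (fun ω => (∑ j ∈ insert i s, X j ω) ^ 2) = fun ω => (Y ω + T ω) ^ 2 := by
        funext ω; rw [hsum ω]
      rw [e, E2', ihE2, Finset.sum_insert hi]
    -- third moment
    have goalE3 : ∫ ω, (∑ j ∈ insert i s, X j ω) ^ 3 ∂P = 0 := by
      have e : (fun ω => (∑ j ∈ insert i s, X j ω) ^ 3) = fun ω => (Y ω + T ω) ^ 3 := by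
        funext ω; rw [hsum ω]
      have hfun : (fun ω => (Y ω + T ω) ^ 3)
          = fun ω => Y ω ^ 3 + (3 * (Y ω ^ 2 * T ω) + (3 * (Y ω * T ω ^ 2) + T ω ^ 3)) := by
        funext ω; ring
      have c1 : Integrable (fun ω => 3 * (Y ω * T ω ^ 2) + T ω ^ 3) P :=
        (hIprodYT2.const_mul 3).add (hIT 3 (by norm_num))
      have c2 : Integrable (fun ω => 3 * (Y ω ^ 2 * T ω) + (3 * (Y ω * T ω ^ 2) + T ω ^ 3)) P :=
        (hIprodY2T.const_mul 3).add c1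
      have c3 : Integrable (fun ω => 3 * (Y ω ^ 2 * T ω)) P := hIprodY2T.const_mul 3
      have c4 : Integrable (fun ω => 3 * (Y ω * T ω ^ 2)) P := hIprodYT2.const_mul 3
      rw [e, hfun, integral_add (hIY 3 (by norm_num)) c2, integral_add c3 c1,
        integral_add c4 (hIT 3 (by norm_num)),
        integral_const_mul, integral_const_mul, hE_Y2T, hE_YT2, hEY3, hET3]
      ring
    -- fourth moment
    have E4' : ∫ ω, (Y ω + T ω) ^ 4 ∂P
        = (∫ ω, Y ω ^ 4 ∂P) + 6 * ((∫ ω, Y ω ^ 2 ∂P) * ∫ ω, T ω ^ 2 ∂P)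
          + ∫ ω, T ω ^ 4 ∂P := by
      have hfun : (fun ω => (Y ω + T ω) ^ 4)
          = fun ω => Y ω ^ 4 + (4 * (Y ω ^ 3 * T ω) + (6 * (Y ω ^ 2 * T ω ^ 2)
            + (4 * (Y ω * T ω ^ 3) + T ω ^ 4))) := by
        funext ω; ring
      have d1 : Integrable (fun ω => 4 * (Y ω * T ω ^ 3) + T ω ^ 4) P :=
        (hIprodYT3.const_mul 4).add (hIT 4 le_rfl)
      have d2 : Integrable (fun ω => 6 * (Y ω ^ 2 * T ω ^ 2)
          + (4 * (Y ω * T ω ^ 3) + T ω ^ 4)) P :=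
        (hIprodY2T2.const_mul 6).add d1
      have d3 : Integrable (fun ω => 4 * (Y ω ^ 3 * T ω) + (6 * (Y ω ^ 2 * T ω ^ 2)
          + (4 * (Y ω * T ω ^ 3) + T ω ^ 4))) P :=
        (hIprodY3T.const_mul 4).add d2
      have d4 : Integrable (fun ω => 4 * (Y ω ^ 3 * T ω)) P := hIprodY3T.const_mul 4
      have d5 : Integrable (fun ω => 6 * (Y ω ^ 2 * T ω ^ 2)) P := hIprodY2T2.const_mul 6
      have d6 : Integrable (fun ω => 4 * (Y ω * T ω ^ 3)) P := hIprodYT3.const_mul 4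
      rw [hfun, integral_add (hIY 4 le_rfl) d3, integral_add d4 d2, integral_add d5 d1,
        integral_add d6 (hIT 4 le_rfl),
        integral_const_mul, integral_const_mul, integral_const_mul,
        hE_Y3T, hE_YT3, hE_Y2T2]
      ring
    have goalE4 : ∫ ω, (∑ j ∈ insert i s, X j ω) ^ 4 ∂P
        = ∑ j ∈ insert i s, (∫ ω, X j ω ^ 4 ∂P)
          + 3 * ((∑ j ∈ insert i s, ∫ ω, X j ω ^ 2 ∂P) ^ 2
            - ∑ j ∈ insert i s, (∫ ω, X j ω ^ 2 ∂P) ^ 2) := by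
      have e : (fun ω => (∑ j ∈ insert i s, X j ω) ^ 4) = fun ω => (Y ω + T ω) ^ 4 := by
        funext ω; rw [hsum ω]
      rw [e, E4', ihE4, ihE2, Finset.sum_insert hi, Finset.sum_insert hi,
        Finset.sum_insert hi]
      ring
    exact ⟨goalInt, goalE1, goalE2, goalE3, goalE4⟩



variable {Ω : Type*} [MeasurableSpace Ω] {P : Measure Ω}


/-- The FMS component variables `W` built from an independent real-valued family indexed by
`FMSIndex` are such that each is independent of the sum of any other collection of them. -/
lemma indepFun_W_sum {n l : ℕ}
    (F : FMSIndex n l → Ω → ℝ)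
    (hindep : iIndepFun (m := fun _ => (inferInstance : MeasurableSpace ℝ)) F P)
    (hmeas : ∀ k, Measurable (F k))
    (A B : ℝ) (vv : Fin n → ℝ)
    (W : Fin n ⊕ Fin l → Ω → ℝ)
    (hW : W = fun p => Sum.elim (fun i ω => (A * vv i) * F (Sum.inl i) ω)
        (fun j ω => B * (F (Sum.inr (Sum.inl j)) ω * F (Sum.inr (Sum.inr j)) ω)) p)
    (s0 : Finset (Fin n ⊕ Fin l)) (p : Fin n ⊕ Fin l) (hp : p ∉ s0) :
    IndepFun (W p) (fun ω => ∑ j ∈ s0, W j ω) P := by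
  classical
  set block : Fin n ⊕ Fin l → Finset (FMSIndex n l) := fun p => Sum.elim
    (fun i => {Sum.inl i})
    (fun j => {Sum.inr (Sum.inl j), Sum.inr (Sum.inr j)}) p with hblock
  set T : Finset (FMSIndex n l) := s0.biUnion block with hTdef
  have hblock_mem : ∀ (j : Fin n ⊕ Fin l), j ∈ s0 → ∀ x ∈ block j, x ∈ T := fun j hj x hx =>
    Finset.mem_biUnion.mpr ⟨j, hj, hx⟩
  have hdisj : Disjoint (block p) T := by
    rw [Finset.disjoint_left]
    rintro x hx hxT
    obtain ⟨j, hj, hxj⟩ := Finset.mem_biUnion.mp hxT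
    have hpj : p = j := by
      rcases p with i0 | j0 <;> rcases j with i1 | j1 <;>
        simp only [hblock, Sum.elim_inl, Sum.elim_inr, Finset.mem_singleton,
          Finset.mem_insert] at hx hxj
      · rw [hx] at hxj
        exact congrArg Sum.inl (Sum.inl.inj hxj)
      · rcases hxj with h | h <;> rw [hx] at h <;> simp at h
      · rcases hx with h | h <;> rw [h] at hxj <;> simp at hxj
      · rcases hx with h | h <;> rw [h] at hxj <;>
          rcases hxj with h' | h' <;> simp at h' <;>
          exact congrArg Sum.inr h'
    exact hp (hpj ▸ hj)
  have hbig := hindep.indepFun_finset (block p) T hdisj hmeas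
  -- extension maps
  set extP : ((x : {x // x ∈ block p}) → ℝ) → (FMSIndex n l → ℝ) :=
    fun p0 x => if hx : x ∈ block p then p0 ⟨x, hx⟩ else 0 with hextP
  set extT : ((x : {x // x ∈ T}) → ℝ) → (FMSIndex n l → ℝ) :=
    fun p0 x => if hx : x ∈ T then p0 ⟨x, hx⟩ else 0 with hextT
  have hextPmeas : Measurable extP := by
    refine measurable_pi_lambda _ fun x => ?_
    by_cases hx : x ∈ block p
    · simp only [hextP, dif_pos hx]; exact measurable_pi_apply _
    · simp only [hextP, dif_neg hx]; exact measurable_const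
  have hextTmeas : Measurable extT := by
    refine measurable_pi_lambda _ fun x => ?_
    by_cases hx : x ∈ T
    · simp only [hextT, dif_pos hx]; exact measurable_pi_apply _
    · simp only [hextT, dif_neg hx]; exact measurable_const
  set WF : (Fin n ⊕ Fin l) → (FMSIndex n l → ℝ) → ℝ := fun p0 => Sum.elim
    (fun i => fun q0 => (A * vv i) * q0 (Sum.inl i))
    (fun j => fun q0 => B * (q0 (Sum.inr (Sum.inl j)) * q0 (Sum.inr (Sum.inr j)))) p0
    with hWF
  have hWFmeas : ∀ p0, Measurable (WF p0) := by
    rintro (i | j)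
    · exact (measurable_pi_apply _).const_mul _
    · have m1 : Measurable fun q0 : FMSIndex n l → ℝ => q0 (Sum.inr (Sum.inl j)) :=
        measurable_pi_apply _
      have m2 : Measurable fun q0 : FMSIndex n l → ℝ => q0 (Sum.inr (Sum.inr j)) :=
        measurable_pi_apply _
      exact (m1.mul m2).const_mul B
  have hφmeas : Measurable fun p0 => WF p (extP p0) := (hWFmeas p).comp hextPmeas
  have hψmeas : Measurable fun p0 => ∑ j ∈ s0, WF j (extT p0) :=
    Finset.measurable_sum _ fun j _ => (hWFmeas j).comp hextTmeas
  have hcomp := hbig.comp hφmeas hψmeas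
  have e1 : ((fun p0 => WF p (extP p0)) ∘ (fun ω (x : {x // x ∈ block p}) => F x ω)) = W p := by
    funext ω
    rcases p with i | j
    · show (A * vv i) * (if hx : (Sum.inl i : FMSIndex n l) ∈ block (Sum.inl i)
          then F (Sum.inl i) ω else 0) = W (Sum.inl i) ω
      rw [dif_pos (by simp [hblock]), hW]
      rfl
    · show B * ((if hx : (Sum.inr (Sum.inl j) : FMSIndex n l) ∈ block (Sum.inr j)
          then F (Sum.inr (Sum.inl j)) ω else 0)
          * (if hx : (Sum.inr (Sum.inr j) : FMSIndex n l) ∈ block (Sum.inr j)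
            then F (Sum.inr (Sum.inr j)) ω else 0)) = W (Sum.inr j) ω
      rw [dif_pos (by simp [hblock]), dif_pos (by simp [hblock]), hW]
      rfl
  have e2 : ((fun p0 => ∑ j ∈ s0, WF j (extT p0)) ∘ (fun ω (x : {x // x ∈ T}) => F x ω))
      = fun ω => ∑ j ∈ s0, W j ω := by
    funext ω
    show ∑ j ∈ s0, WF j (extT (fun x => F x.1 ω)) = ∑ j ∈ s0, W j ω
    refine Finset.sum_congr rfl fun j hj => ?_
    rcases j with i | j'
    · show (A * vv i) * (if hx : (Sum.inl i : FMSIndex n l) ∈ T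
          then F (Sum.inl i) ω else 0) = W (Sum.inl i) ω
      rw [dif_pos (hblock_mem _ hj _ (by simp [hblock])), hW]
      rfl
    · show B * ((if hx : (Sum.inr (Sum.inl j') : FMSIndex n l) ∈ T
          then F (Sum.inr (Sum.inl j')) ω else 0)
          * (if hx : (Sum.inr (Sum.inr j') : FMSIndex n l) ∈ T
            then F (Sum.inr (Sum.inr j')) ω else 0)) = W (Sum.inr j') ω
      rw [dif_pos (hblock_mem _ hj _ (by simp [hblock])),
        dif_pos (hblock_mem _ hj _ (by simp [hblock])), hW]
      rfl
  rw [e1, e2] at hcomp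
  exact hcomp


end FMSAux

set_option maxHeartbeats 2000000 in
/-- **Excess kurtosis of the projection of the FMS mixture.**
For every unit vector `v ∈ ℝ^n`,
`E[⟪v,z⟫⁴]/(E[⟪v,z⟫²])² − 3 = (3/l)((∑_j α_j d_j²)/(∑_j α_j d_j)² − 1)` with
`d_j = (1−γ) + γ⟪v,q_j⟫²` (note `∑_j α_j d_j ≥ 1−γ > 0`). -/
theorem fms_projected_excess_kurtosis
    {n m l : ℕ} (hn : 0 < n) (hm : 0 < m) (hl : 0 < l)
    (q : Fin m → EuclideanSpace ℝ (Fin n))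
    (α : Fin m → ℝ) (hα : ∀ k, α k ∈ Set.Ioo (0 : ℝ) 1) (hαsum : ∑ k, α k = 1)
    (γ : ℝ) (hγ : γ ∈ Set.Ioo (0 : ℝ) 1)
    {Ω : Type*} [MeasurableSpace Ω] (P : Measure Ω) [IsProbabilityMeasure P]
    (z₀ : Ω → EuclideanSpace ℝ (Fin n)) (zs : Fin l → Ω → ℝ) (idx : Fin l → Ω → Fin m)
    (hz₀ : ∀ i : Fin n, Measure.map (fun ω => z₀ ω i) P = gaussianReal 0 1)
    (hzs : ∀ j : Fin l, Measure.map (zs j) P = gaussianReal 0 1)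
    (hidx : ∀ (j : Fin l) (k : Fin m), P {ω | idx j ω = k} = ENNReal.ofReal (α k))
    (hindep : iIndepFun (m := fun k => FMSCodomain.instMeasurableSpace n m l k)
      (FMSFamily z₀ zs idx) P)
    (z : Ω → EuclideanSpace ℝ (Fin n))
    (hz : ∀ ω, z ω = Real.sqrt (1 - γ) • z₀ ω
        + Real.sqrt (γ / l) • ∑ j : Fin l, zs j ω • q (idx j ω))
    (v : EuclideanSpace ℝ (Fin n)) (hv : ‖v‖ = 1) :
    (∫ ω, ⟪v, z ω⟫ ^ 4 ∂P) / (∫ ω, ⟪v, z ω⟫ ^ 2 ∂P) ^ 2 - 3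
      = 3 / l * ((∑ j : Fin m, α j * ((1 - γ) + γ * ⟪v, q j⟫ ^ 2) ^ 2)
          / (∑ j : Fin m, α j * ((1 - γ) + γ * ⟪v, q j⟫ ^ 2)) ^ 2 - 1) := by
  classical
  obtain ⟨hγ0, hγ1⟩ := hγ
  have hl0 : (0:ℝ) < l := by exact_mod_cast hl
  have hl' : (l:ℝ) ≠ 0 := hl0.ne'
  have hα0 : ∀ k, 0 ≤ α k := fun k => (hα k).1.le
  set a : ℝ := Real.sqrt (1 - γ) with ha
  set b : ℝ := Real.sqrt (γ / l) with hb
  have ha2 : a ^ 2 = 1 - γ := Real.sq_sqrt (by linarith)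
  have hb2 : b ^ 2 = γ / l := Real.sq_sqrt (by positivity)
  set s : ℝ := ∑ k, α k * ⟪v, q k⟫ ^ 2 with hs
  set t : ℝ := ∑ k, α k * ⟪v, q k⟫ ^ 4 with ht
  -- measurable modifications of the ingredients
  have hZae : ∀ i : Fin n, AEMeasurable (fun ω => z₀ ω i) P := by
    intro i
    by_contra hcon
    have h1 := hz₀ i
    rw [Measure.map_of_not_aemeasurable hcon] at h1
    have h2 : (gaussianReal 0 1) Set.univ = 1 := measure_univ
    rw [← h1] at h2
    simp at h2
  have hzsae : ∀ j : Fin l, AEMeasurable (zs j) P := by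
    intro j
    by_contra hcon
    have h1 := hzs j
    rw [Measure.map_of_not_aemeasurable hcon] at h1
    have h2 : (gaussianReal 0 1) Set.univ = 1 := measure_univ
    rw [← h1] at h2
    simp at h2
  choose Z' hZ'meas hZ'ae using hZae
  choose zs' hzs'meas hzs'ae using hzsae
  have hidxex : ∀ j : Fin l, ∃ g : Ω → Fin m, Measurable g ∧ idx j =ᵐ[P] g := fun j =>
    FMSAux.exists_measurable_discrete hm (idx j) α hα0 (fun k => (hα k).2.le) hαsum (hidx j)
  choose idx' hidx'meas hidx'ae using hidxex
  -- transported laws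
  have hmapZ : ∀ i, Measure.map (Z' i) P = gaussianReal 0 1 := fun i =>
    (Measure.map_congr (hZ'ae i)).symm.trans (hz₀ i)
  have hmapzs : ∀ j, Measure.map (zs' j) P = gaussianReal 0 1 := fun j =>
    (Measure.map_congr (hzs'ae j)).symm.trans (hzs j)
  have hidxprob : ∀ j k, P (idx' j ⁻¹' {k}) = ENNReal.ofReal (α k) := by
    intro j k
    have hsetae : {ω | idx j ω = k} =ᵐ[P] idx' j ⁻¹' {k} :=
      Filter.eventuallyEq_set.mpr ((hidx'ae j).mono fun ω h => by
        simp [Set.mem_preimage, Set.mem_setOf_eq, h])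
    exact (measure_congr hsetae).symm.trans (hidx j k)
  -- the modified independent family
  set z₀' : Ω → EuclideanSpace ℝ (Fin n) := fun ω => WithLp.toLp 2 (fun i => Z' i ω) with hz₀'
  have h_ae : ∀ k, FMSFamily z₀ zs idx k =ᵐ[P] FMSFamily z₀' zs' idx' k := by
    intro k
    rcases k with i | j | j
    · exact hZ'ae i
    · exact hzs'ae j
    · exact hidx'ae j
  have hindep' : iIndepFun (m := fun k => FMSCodomain.instMeasurableSpace n m l k)
      (FMSFamily z₀' zs' idx') P := FMSAux.iIndepFun_congr_ae hindep h_ae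
  have hF'meas : ∀ k, Measurable (FMSFamily z₀' zs' idx' k) := by
    intro k
    rcases k with i | j | j
    · exact hZ'meas i
    · exact hzs'meas j
    · exact hidx'meas j
  -- compose to a real-valued family
  set G : ∀ k : FMSIndex n l, FMSCodomain n m l k → ℝ := fun k =>
    match k with
    | Sum.inl _ => id
    | Sum.inr (Sum.inl _) => id
    | Sum.inr (Sum.inr _) => fun x => ⟪v, q x⟫
    with hG
  have hGmeas : ∀ k, Measurable (G k) := by
    intro k
    rcases k with i | j | j
    · exact measurable_id
    · exact measurable_id
    · exact measurable_of_countable (fun x => ⟪v, q x⟫)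
  set F : FMSIndex n l → Ω → ℝ := fun k => G k ∘ FMSFamily z₀' zs' idx' k with hF
  have hFindep : iIndepFun (m := fun _ : FMSIndex n l => (inferInstance : MeasurableSpace ℝ)) F P :=
    hindep'.comp G hGmeas
  have hFmeas : ∀ k, Measurable (F k) := fun k => (hGmeas k).comp (hF'meas k)
  -- the component variables
  set W : Fin n ⊕ Fin l → Ω → ℝ := fun p => Sum.elim
    (fun i ω => (a * v i) * F (Sum.inl i) ω)
    (fun j ω => b * (F (Sum.inr (Sum.inl j)) ω * F (Sum.inr (Sum.inr j)) ω)) p with hW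
  have hWmeas : ∀ p, Measurable (W p) := by
    rintro (i | j)
    · exact (hFmeas (Sum.inl i)).const_mul _
    · have m1 : Measurable (F (Sum.inr (Sum.inl j))) := hFmeas _
      have m2 : Measurable (F (Sum.inr (Sum.inr j))) := hFmeas _
      exact (m1.mul m2).const_mul b
  have hWpair : ∀ (s0 : Finset (Fin n ⊕ Fin l)) (p : Fin n ⊕ Fin l), p ∉ s0 →
      IndepFun (W p) (fun ω => ∑ j ∈ s0, W j ω) P := fun s0 p hp =>
    FMSAux.indepFun_W_sum F hFindep hFmeas a b (fun i => v i) W hW s0 p hp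
  -- identifications of the components
  have hFinl : ∀ i, F (Sum.inl i) = Z' i := fun i => rfl
  have hFzs : ∀ j, F (Sum.inr (Sum.inl j)) = zs' j := fun j => rfl
  have hFidx : ∀ j, F (Sum.inr (Sum.inr j)) = fun ω => ⟪v, q (idx' j ω)⟫ := fun j => rfl
  -- moments of the Gaussian components
  have hmomZ : ∀ i k, ∫ ω, Z' i ω ^ k ∂P = ∫ x, x ^ k ∂(gaussianReal 0 1) := fun i k =>
    FMSAux.moment_from_map (hZ'meas i) (hmapZ i) k
  have hmomzs : ∀ j k, ∫ ω, zs' j ω ^ k ∂P = ∫ x, x ^ k ∂(gaussianReal 0 1) := fun j k =>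
    FMSAux.moment_from_map (hzs'meas j) (hmapzs j) k
  have hint4Z : ∀ i, Integrable (fun ω => Z' i ω ^ 4) P := fun i =>
    FMSAux.integrable_pow4_from_map (hZ'meas i) (hmapZ i)
  have hint4zs : ∀ j, Integrable (fun ω => zs' j ω ^ 4) P := fun j =>
    FMSAux.integrable_pow4_from_map (hzs'meas j) (hmapzs j)
  -- independence of Gaussian and index parts
  have hIndZC : ∀ j : Fin l,
      IndepFun (zs' j) (fun ω => ⟪v, q (idx' j ω)⟫) P := by
    intro j
    have h := hFindep.indepFun
      (show (Sum.inr (Sum.inl j) : FMSIndex n l) ≠ Sum.inr (Sum.inr j) by simp)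
    rwa [hFzs j, hFidx j] at h
  -- moments of the mixed components
  have hmomR : ∀ (j : Fin l) (k : ℕ), k ≤ 4 →
      ∫ ω, (zs' j ω * ⟪v, q (idx' j ω)⟫) ^ k ∂P
        = (∫ x, x ^ k ∂(gaussianReal 0 1)) * ∑ k', α k' * ⟪v, q k'⟫ ^ k := by
    intro j k hk
    have h1 : (fun ω => (zs' j ω * ⟪v, q (idx' j ω)⟫) ^ k)
        = fun ω => (zs' j ω ^ k) * ((fun x => ⟪v, q x⟫ ^ k) (idx' j ω)) := by
      funext ω; rw [mul_pow]
    have hind : IndepFun (fun ω => zs' j ω ^ k) (fun ω => (fun x => ⟪v, q x⟫ ^ k) (idx' j ω)) P :=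
      (hIndZC j).comp (measurable_id.pow_const k) (measurable_id.pow_const k)
    have hi1 : Integrable (fun ω => zs' j ω ^ k) P :=
      FMSAux.integrable_pow_le (hzs'meas j).aestronglyMeasurable (hint4zs j) hk
    have hi2 : Integrable (fun ω => (fun x => ⟪v, q x⟫ ^ k) (idx' j ω)) P :=
      FMSAux.discrete_integrable (P := P) (hidx'meas j) (fun x => ⟪v, q x⟫ ^ k)
    have heq : ∫ ω, zs' j ω ^ k * ((fun x => ⟪v, q x⟫ ^ k) (idx' j ω)) ∂P
        = (∫ ω, zs' j ω ^ k ∂P) * ∫ ω, (fun x => ⟪v, q x⟫ ^ k) (idx' j ω) ∂P :=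
      hind.integral_mul_eq_mul_integral hi1.aestronglyMeasurable hi2.aestronglyMeasurable
    rw [h1, heq, hmomzs j k,
      FMSAux.discrete_moment (hidx'meas j) hα0 (hidxprob j) (fun x => ⟪v, q x⟫ ^ k)]
  have hintR : ∀ (j : Fin l) (k : ℕ), k ≤ 4 →
      Integrable (fun ω => (zs' j ω * ⟪v, q (idx' j ω)⟫) ^ k) P := by
    intro j k hk
    have h1 : (fun ω => (zs' j ω * ⟪v, q (idx' j ω)⟫) ^ k)
        = fun ω => (zs' j ω ^ k) * ((fun x => ⟪v, q x⟫ ^ k) (idx' j ω)) := by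
      funext ω; rw [mul_pow]
    have hind : IndepFun (fun ω => zs' j ω ^ k) (fun ω => (fun x => ⟪v, q x⟫ ^ k) (idx' j ω)) P :=
      (hIndZC j).comp (measurable_id.pow_const k) (measurable_id.pow_const k)
    have hi1 : Integrable (fun ω => zs' j ω ^ k) P :=
      FMSAux.integrable_pow_le (hzs'meas j).aestronglyMeasurable (hint4zs j) hk
    have hi2 : Integrable (fun ω => (fun x => ⟪v, q x⟫ ^ k) (idx' j ω)) P :=
      FMSAux.discrete_integrable (P := P) (hidx'meas j) (fun x => ⟪v, q x⟫ ^ k)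
    rw [h1]
    exact hind.integrable_mul hi1 hi2
  -- hypotheses for the sum-moment machinery
  have h4W : ∀ p, Integrable (fun ω => W p ω ^ 4) P := by
    rintro (i | j)
    · have e : (fun ω => W (Sum.inl i) ω ^ 4)
          = fun ω => (a * v i) ^ 4 * Z' i ω ^ 4 := by
        funext ω
        show ((a * v i) * Z' i ω) ^ 4 = _
        ring
      rw [e]
      exact (hint4Z i).const_mul _
    · have e : (fun ω => W (Sum.inr j) ω ^ 4)
          = fun ω => b ^ 4 * (zs' j ω * ⟪v, q (idx' j ω)⟫) ^ 4 := by
        funext ω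
        show (b * (zs' j ω * ⟪v, q (idx' j ω)⟫)) ^ 4 = _
        ring
      rw [e]
      exact (hintR j 4 le_rfl).const_mul _
  have h1W : ∀ p, ∫ ω, W p ω ∂P = 0 := by
    rintro (i | j)
    · show ∫ ω, (a * v i) * Z' i ω ∂P = 0
      rw [integral_const_mul]
      have := hmomZ i 1
      simp only [pow_one] at this
      rw [this, FMSAux.gaussianReal_mom1, mul_zero]
    · show ∫ ω, b * (zs' j ω * ⟪v, q (idx' j ω)⟫) ∂P = 0
      rw [integral_const_mul]
      have := hmomR j 1 (by norm_num)
      simp only [pow_one] at this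
      rw [this, FMSAux.gaussianReal_mom1, zero_mul, mul_zero]
  have h3W : ∀ p, ∫ ω, W p ω ^ 3 ∂P = 0 := by
    rintro (i | j)
    · have e : (fun ω => W (Sum.inl i) ω ^ 3)
          = fun ω => (a * v i) ^ 3 * Z' i ω ^ 3 := by
        funext ω
        show ((a * v i) * Z' i ω) ^ 3 = _
        ring
      rw [e, integral_const_mul, hmomZ i 3, FMSAux.gaussianReal_mom3, mul_zero]
    · have e : (fun ω => W (Sum.inr j) ω ^ 3)
          = fun ω => b ^ 3 * (zs' j ω * ⟪v, q (idx' j ω)⟫) ^ 3 := by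
        funext ω
        show (b * (zs' j ω * ⟪v, q (idx' j ω)⟫)) ^ 3 = _
        ring
      rw [e, integral_const_mul, hmomR j 3 (by norm_num), FMSAux.gaussianReal_mom3, zero_mul,
        mul_zero]
  -- second and fourth moments of the components
  have hm2l : ∀ i, ∫ ω, W (Sum.inl i) ω ^ 2 ∂P = (1 - γ) * v i ^ 2 := by
    intro i
    have e : (fun ω => W (Sum.inl i) ω ^ 2)
        = fun ω => (a ^ 2 * v i ^ 2) * Z' i ω ^ 2 := by
      funext ω
      show ((a * v i) * Z' i ω) ^ 2 = _
      ring
    rw [e, integral_const_mul, hmomZ i 2, FMSAux.gaussianReal_mom2, mul_one, ha2]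
  have hm2r : ∀ j, ∫ ω, W (Sum.inr j) ω ^ 2 ∂P = γ / l * s := by
    intro j
    have e : (fun ω => W (Sum.inr j) ω ^ 2)
        = fun ω => b ^ 2 * (zs' j ω * ⟪v, q (idx' j ω)⟫) ^ 2 := by
      funext ω
      show (b * (zs' j ω * ⟪v, q (idx' j ω)⟫)) ^ 2 = _
      ring
    rw [e, integral_const_mul, hmomR j 2 (by norm_num), FMSAux.gaussianReal_mom2, one_mul,
      hb2, ← hs]
  have hm4l : ∀ i, ∫ ω, W (Sum.inl i) ω ^ 4 ∂P = 3 * ((1 - γ) ^ 2 * v i ^ 4) := by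
    intro i
    have e : (fun ω => W (Sum.inl i) ω ^ 4)
        = fun ω => ((a ^ 2) ^ 2 * v i ^ 4) * Z' i ω ^ 4 := by
      funext ω
      show ((a * v i) * Z' i ω) ^ 4 = _
      ring
    rw [e, integral_const_mul, hmomZ i 4, FMSAux.gaussianReal_mom4, ha2]
    ring
  have hm4r : ∀ j, ∫ ω, W (Sum.inr j) ω ^ 4 ∂P = 3 * ((γ / l) ^ 2 * t) := by
    intro j
    have e : (fun ω => W (Sum.inr j) ω ^ 4)
        = fun ω => (b ^ 2) ^ 2 * (zs' j ω * ⟪v, q (idx' j ω)⟫) ^ 4 := by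
      funext ω
      show (b * (zs' j ω * ⟪v, q (idx' j ω)⟫)) ^ 4 = _
      ring
    rw [e, integral_const_mul, hmomR j 4 le_rfl, FMSAux.gaussianReal_mom4, hb2, ← ht]
    ring
  -- the sum-moment machinery
  obtain ⟨hSint, hSE1, hSE2, hSE3, hSE4⟩ := FMSAux.sum_indep_moments W hWmeas hWpair h4W h1W h3W
    (Finset.univ : Finset (Fin n ⊕ Fin l))
  -- numeric values of the sums
  have hv2 : ∑ i, v i ^ 2 = 1 := by
    have hnorm : Real.sqrt (∑ i, ‖v i‖ ^ 2) = 1 := by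
      rw [← EuclideanSpace.norm_eq v, hv]
    have h2 : ∑ i, ‖v i‖ ^ 2 = 1 := by
      rw [← Real.sq_sqrt (Finset.sum_nonneg fun (i : Fin n) _ => sq_nonneg ‖v i‖), hnorm,
        one_pow]
    simpa [Real.norm_eq_abs, sq_abs] using h2
  have hsum2 : ∑ p : Fin n ⊕ Fin l, ∫ ω, W p ω ^ 2 ∂P = (1 - γ) + γ * s := by
    rw [Fintype.sum_sum_type]
    have e1 : ∑ i : Fin n, ∫ ω, W (Sum.inl i) ω ^ 2 ∂P = (1 - γ) * ∑ i, v i ^ 2 := by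
      rw [Finset.mul_sum]
      exact Finset.sum_congr rfl fun i _ => hm2l i
    have e2 : ∑ j : Fin l, ∫ ω, W (Sum.inr j) ω ^ 2 ∂P = (l : ℝ) * (γ / l * s) := by
      rw [Finset.sum_congr rfl fun j _ => hm2r j, Finset.sum_const,
        Finset.card_univ, Fintype.card_fin, nsmul_eq_mul]
    rw [e1, e2, hv2]
    field_simp
  have hsum4 : ∑ p : Fin n ⊕ Fin l, ∫ ω, W p ω ^ 4 ∂P
      = 3 * ((1 - γ) ^ 2 * ∑ i, v i ^ 4) + (l : ℝ) * (3 * ((γ / l) ^ 2 * t)) := by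
    rw [Fintype.sum_sum_type]
    have e1 : ∑ i : Fin n, ∫ ω, W (Sum.inl i) ω ^ 4 ∂P
        = 3 * ((1 - γ) ^ 2 * ∑ i, v i ^ 4) := by
      rw [Finset.mul_sum, Finset.mul_sum]
      exact Finset.sum_congr rfl fun i _ => by rw [hm4l i]
    have e2 : ∑ j : Fin l, ∫ ω, W (Sum.inr j) ω ^ 4 ∂P
        = (l : ℝ) * (3 * ((γ / l) ^ 2 * t)) := by
      rw [Finset.sum_congr rfl fun j _ => hm4r j, Finset.sum_const,
        Finset.card_univ, Fintype.card_fin, nsmul_eq_mul]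
    rw [e1, e2]
  have hsum2sq : ∑ p : Fin n ⊕ Fin l, (∫ ω, W p ω ^ 2 ∂P) ^ 2
      = (1 - γ) ^ 2 * ∑ i, v i ^ 4 + (l : ℝ) * (γ / l * s) ^ 2 := by
    rw [Fintype.sum_sum_type]
    have e1 : ∑ i : Fin n, (∫ ω, W (Sum.inl i) ω ^ 2 ∂P) ^ 2
        = (1 - γ) ^ 2 * ∑ i, v i ^ 4 := by
      rw [Finset.mul_sum]
      refine Finset.sum_congr rfl fun i _ => ?_
      rw [hm2l i]
      ring
    have e2 : ∑ j : Fin l, (∫ ω, W (Sum.inr j) ω ^ 2 ∂P) ^ 2 = (l : ℝ) * (γ / l * s) ^ 2 := by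
      rw [Finset.sum_congr rfl fun j _ => by rw [hm2r j], Finset.sum_const,
        Finset.card_univ, Fintype.card_fin, nsmul_eq_mul]
    rw [e1, e2]
  -- moments of the full sum
  have hI2 : ∫ ω, (∑ p : Fin n ⊕ Fin l, W p ω) ^ 2 ∂P = (1 - γ) + γ * s := by
    rw [hSE2, hsum2]
  have hI4 : ∫ ω, (∑ p : Fin n ⊕ Fin l, W p ω) ^ 4 ∂P
      = 3 * ((1 - γ) + γ * s) ^ 2 + 3 * γ ^ 2 * (t - s ^ 2) / l := by
    rw [hSE4, hsum4, hsum2sq, hsum2]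
    field_simp
    ring
  -- identification of the projection with the sum
  have hae : ∀ᵐ ω ∂P, ⟪v, z ω⟫ = ∑ p : Fin n ⊕ Fin l, W p ω := by
    have h1ae : ∀ᵐ ω ∂P, ∀ i, z₀ ω i = Z' i ω := ae_all_iff.mpr hZ'ae
    have h2ae : ∀ᵐ ω ∂P, ∀ j, zs j ω = zs' j ω := ae_all_iff.mpr hzs'ae
    have h3ae : ∀ᵐ ω ∂P, ∀ j, idx j ω = idx' j ω := ae_all_iff.mpr hidx'ae
    filter_upwards [h1ae, h2ae, h3ae] with ω e1 e2 e3
    have hinner0 : ⟪v, z₀ ω⟫ = ∑ i, v i * z₀ ω i := by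
      simp [PiLp.inner_apply, RCLike.inner_apply, conj_trivial, mul_comm]
    have hlhs : ⟪v, z ω⟫ = a * (∑ i, v i * z₀ ω i)
        + b * ∑ j, zs j ω * ⟪v, q (idx j ω)⟫ := by
      rw [hz ω, inner_add_right, real_inner_smul_right, real_inner_smul_right, inner_sum,
        hinner0]
      congr 1
      congr 1
      exact Finset.sum_congr rfl fun j _ => real_inner_smul_right _ _ _
    rw [hlhs, Fintype.sum_sum_type]
    have hr1 : ∑ i : Fin n, W (Sum.inl i) ω = a * ∑ i, v i * z₀ ω i := by
      rw [Finset.mul_sum]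
      refine Finset.sum_congr rfl fun i _ => ?_
      show (a * v i) * Z' i ω = _
      rw [← e1 i]
      ring
    have hr2 : ∑ j : Fin l, W (Sum.inr j) ω = b * ∑ j, zs j ω * ⟪v, q (idx j ω)⟫ := by
      rw [Finset.mul_sum]
      refine Finset.sum_congr rfl fun j _ => ?_
      show b * (zs' j ω * ⟪v, q (idx' j ω)⟫) = _
      rw [← e2 j, ← e3 j]
    rw [hr1, hr2]
  have hint2 : ∫ ω, ⟪v, z ω⟫ ^ 2 ∂P = ∫ ω, (∑ p : Fin n ⊕ Fin l, W p ω) ^ 2 ∂P :=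
    integral_congr_ae (hae.mono fun ω h => by dsimp only; rw [h])
  have hint4 : ∫ ω, ⟪v, z ω⟫ ^ 4 ∂P = ∫ ω, (∑ p : Fin n ⊕ Fin l, W p ω) ^ 4 ∂P :=
    integral_congr_ae (hae.mono fun ω h => by dsimp only; rw [h])
  -- the right-hand side sums
  have hseq : ∑ j : Fin m, α j * ((1 - γ) + γ * ⟪v, q j⟫ ^ 2) = (1 - γ) + γ * s := by
    have e : ∀ j : Fin m, α j * ((1 - γ) + γ * ⟪v, q j⟫ ^ 2)
        = (1 - γ) * α j + γ * (α j * ⟪v, q j⟫ ^ 2) := fun j => by ring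
    rw [Finset.sum_congr rfl fun j _ => e j, Finset.sum_add_distrib, ← Finset.mul_sum,
      ← Finset.mul_sum, hαsum, hs]
    ring
  have hteq : ∑ j : Fin m, α j * ((1 - γ) + γ * ⟪v, q j⟫ ^ 2) ^ 2
      = (1 - γ) ^ 2 + 2 * (1 - γ) * γ * s + γ ^ 2 * t := by
    have e : ∀ j : Fin m, α j * ((1 - γ) + γ * ⟪v, q j⟫ ^ 2) ^ 2
        = (1 - γ) ^ 2 * α j + (2 * (1 - γ) * γ * (α j * ⟪v, q j⟫ ^ 2)
          + γ ^ 2 * (α j * ⟪v, q j⟫ ^ 4)) := fun j => by ring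
    rw [Finset.sum_congr rfl fun j _ => e j, Finset.sum_add_distrib, Finset.sum_add_distrib,
      ← Finset.mul_sum, ← Finset.mul_sum, ← Finset.mul_sum, hαsum, hs, ht]
    ring
  have hs0 : 0 ≤ s := Finset.sum_nonneg fun k _ => mul_nonneg (hα0 k) (sq_nonneg _)
  have hS2pos : (0:ℝ) < (1 - γ) + γ * s := by nlinarith
  rw [hint2, hint4, hI2, hI4, hseq, hteq]
  field_simp
  ring

end
end

section
/- For every positive integer μ, Σ_{i=1}^μ (ln(μ + 0.5) − ln i)² ≥ μ · (ln((2μ + 1)/(μ + 1)))². -/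
/-- **Convexity lower bound for the CMA-ES weights.**
For every positive integer `μ`,
`∑_{i=1}^μ (ln(μ+0.5) − ln i)² ≥ μ (ln((2μ+1)/(μ+1)))²`.
(Indices `i : Fin μ` are zero-based, so the paper's `ln i` reads `ln (i+1)`.) -/
theorem cma_weights_sum_sq_lower_bound (μ : ℕ) (hμ : 0 < μ) :
    (μ : ℝ) * Real.log ((2 * μ + 1) / (μ + 1)) ^ 2
      ≤ ∑ i : Fin μ, (Real.log (μ + 0.5) - Real.log ((i : ℕ) + 1)) ^ 2 := by
  have hμR : (1:ℝ) ≤ (μ:ℝ) := by exact_mod_cast hμ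
  set L : ℝ := Real.log ((μ:ℝ) + 0.5) with hL
  set c : ℝ := ((μ:ℝ) + 1) / 2 with hcdef
  set a : ℝ := Real.log ((2 * (μ:ℝ) + 1) / ((μ:ℝ) + 1)) with ha'
  have hc : (0:ℝ) < c := by rw [hcdef]; linarith
  have ha : 0 ≤ a := by
    apply Real.log_nonneg
    rw [le_div_iff₀ (by linarith)]
    linarith
  have hLa : L - Real.log c = a := by
    rw [hL, ha', hcdef, ← Real.log_div (by positivity) (by positivity)]
    congr 1
    field_simp
    ring
  have key : ∀ i : Fin μ,
      a ^ 2 - (2 * a / c) * ((((i:ℕ):ℝ) + 1) - c) ≤ (L - Real.log (((i:ℕ):ℝ) + 1)) ^ 2 := by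
    intro i
    set x : ℝ := ((i:ℕ):ℝ) + 1 with hx'
    have hx : (0:ℝ) < x := by positivity
    set t : ℝ := Real.log x - Real.log c with ht'
    have h1 : Real.log (x / c) ≤ x / c - 1 := Real.log_le_sub_one_of_pos (by positivity)
    have hlog : Real.log (x / c) = t := by rw [ht', Real.log_div hx.ne' hc.ne']
    have h2 : t ≤ x / c - 1 := hlog ▸ h1
    have hrw : L - Real.log x = a - t := by rw [← hLa, ht']; ring
    rw [hrw]
    have h3 : 0 ≤ a * (x / c - 1 - t) := mul_nonneg ha (by linarith)
    have h4 : (x / c - 1) * c = x - c := by field_simp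
    have h5 : 2 * a / c * (x - c) = 2 * (a * (x / c - 1)) := by
      rw [← h4]; field_simp
    rw [h5]
    clear_value a x t
    nlinarith [sq_nonneg t, h3]
  have gauss : ∀ n : ℕ, ∑ i ∈ Finset.range n, ((i:ℝ) + 1) = n * (n + 1) / 2 := by
    intro n
    induction n with
    | zero => simp
    | succ n ih => rw [Finset.sum_range_succ, ih]; push_cast; ring
  have hsum : ∑ i : Fin μ, ((((i:ℕ):ℝ)) + 1) = (μ:ℝ) * c := by
    rw [Fin.sum_univ_eq_sum_range (fun i => ((i:ℝ) + 1)), gauss μ, hcdef]; ring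
  calc (μ:ℝ) * a ^ 2
      = ∑ i : Fin μ, (a ^ 2 - (2 * a / c) * ((((i:ℕ):ℝ) + 1) - c)) := by
        rw [Finset.sum_sub_distrib, Finset.sum_const, ← Finset.mul_sum,
          Finset.sum_sub_distrib, hsum, Finset.sum_const]
        simp
    _ ≤ ∑ i : Fin μ, (L - Real.log (((i:ℕ):ℝ) + 1)) ^ 2 :=
        Finset.sum_le_sum (fun i _ => key i)
    _ = ∑ i : Fin μ, (Real.log ((μ:ℝ) + 0.5) - Real.log (((i:ℕ):ℝ) + 1)) ^ 2 := rfl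
end

section
/- With ω'_i := ln(μ + 0.5) − ln i for i = 1,…,μ, the Lyapunov-type ratio T_μ := (Σ_{i=1}^μ (ω'_i)⁴) / ((Σ_{i=1}^μ (ω'_i)²)²) tends to 0 as μ → ∞. -/
open Filter

/-- **Lyapunov condition for the CMA-ES weights.**
With the unnormalized recombination weights `ω'_i = ln(μ+0.5) − ln i`, the Lyapunov-type
ratio `T_μ = (∑_i (ω'_i)⁴) / (∑_i (ω'_i)²)²` tends to `0` as `μ → ∞`.
(Indices `i : Fin μ` are zero-based, so the paper's `ln i` reads `ln (i+1)`.) -/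
theorem cma_weights_lyapunov_ratio_tendsto_zero :
    Tendsto
      (fun μ : ℕ =>
        (∑ i : Fin μ, (Real.log (μ + 0.5) - Real.log ((i : ℕ) + 1)) ^ 4)
          / (∑ i : Fin μ, (Real.log (μ + 0.5) - Real.log ((i : ℕ) + 1)) ^ 2) ^ 2)
      atTop (nhds 0) := by
  have hg : Tendsto (fun μ : ℕ => 32 * (Real.log (2 * (μ:ℝ)) ^ 4 / (2 * (μ:ℝ))))
      atTop (nhds 0) := by
    have hlog : Tendsto (fun x : ℝ => Real.log x ^ 4 / (1 * x + 0)) atTop (nhds 0) :=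
      Real.tendsto_pow_log_div_mul_add_atTop 1 0 4 one_ne_zero
    have h2 : Tendsto (fun μ : ℕ => 2 * (μ:ℝ)) atTop atTop :=
      (tendsto_natCast_atTop_atTop).const_mul_atTop two_pos
    have := (hlog.comp h2).const_mul (32 : ℝ)
    simpa [Function.comp] using this
  refine tendsto_of_tendsto_of_tendsto_of_le_of_le' tendsto_const_nhds hg
    (Eventually.of_forall fun μ => ?_) ?_
  · exact div_nonneg (Finset.sum_nonneg fun i _ => by positivity) (by positivity)
  · filter_upwards [eventually_ge_atTop 12] with μ hμ
    have hμR : (12:ℝ) ≤ (μ:ℝ) := by exact_mod_cast hμ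
    set L : ℝ := Real.log ((μ:ℝ) + 0.5) with hL
    -- numerator bound
    have hterm : ∀ i : Fin μ, 0 ≤ L - Real.log (((i:ℕ):ℝ) + 1) ∧
        L - Real.log (((i:ℕ):ℝ) + 1) ≤ L := by
      intro i
      have h1 : (0:ℝ) ≤ Real.log (((i:ℕ):ℝ) + 1) := Real.log_nonneg (le_add_of_nonneg_left (Nat.cast_nonneg _))
      have h2 : ((i:ℕ):ℝ) + 1 ≤ (μ:ℝ) + 0.5 := by
        have : (i:ℕ) + 1 ≤ μ := i.2
        have : ((i:ℕ):ℝ) + 1 ≤ (μ:ℝ) := by exact_mod_cast this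
        linarith
      have h3 : Real.log (((i:ℕ):ℝ) + 1) ≤ L :=
        Real.log_le_log (by positivity) h2
      exact ⟨by linarith, by linarith⟩
    have hLnn : 0 ≤ L := le_trans (hterm ⟨0, by omega⟩).1 (by
      simpa using (hterm ⟨0, by omega⟩).2)
    have hN : (∑ i : Fin μ, (L - Real.log (((i:ℕ):ℝ) + 1)) ^ 4) ≤ (μ:ℝ) * L ^ 4 := by
      calc (∑ i : Fin μ, (L - Real.log (((i:ℕ):ℝ) + 1)) ^ 4)
          ≤ ∑ _i : Fin μ, L ^ 4 :=
            Finset.sum_le_sum fun i _ => pow_le_pow_left₀ (hterm i).1 (hterm i).2 4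
        _ = (μ:ℝ) * L ^ 4 := by simp [mul_comm]
    -- denominator bound
    set k : ℕ := μ / 3 with hk
    have hDk : (k:ℝ) ≤ ∑ i : Fin μ, (L - Real.log (((i:ℕ):ℝ) + 1)) ^ 2 := by
      rw [Fin.sum_univ_eq_sum_range (fun i => (L - Real.log ((i:ℝ) + 1)) ^ 2) μ]
      have hsub : Finset.range k ⊆ Finset.range μ := Finset.range_subset_range.2 (by omega)
      calc (k:ℝ) = ∑ _i ∈ Finset.range k, (1:ℝ) := by simp
        _ ≤ ∑ i ∈ Finset.range k, (L - Real.log ((i:ℝ) + 1)) ^ 2 := by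
            refine Finset.sum_le_sum fun i hi => ?_
            have hik : i + 1 ≤ k := Finset.mem_range.1 hi
            have hkr : ((i:ℝ) + 1) ≤ (μ:ℝ) / 3 := by
              have h1 : (3:ℕ) * k ≤ μ := by omega
              have h2 : ((i:ℝ) + 1) ≤ (k:ℝ) := by exact_mod_cast hik
              have h3 : (3:ℝ) * (k:ℝ) ≤ (μ:ℝ) := by exact_mod_cast h1
              linarith
            have hip : (0:ℝ) < (i:ℝ) + 1 := by positivity
            have h1L : 1 ≤ L - Real.log ((i:ℝ) + 1) := by
              have he : Real.exp 1 * ((i:ℝ) + 1) ≤ (μ:ℝ) + 0.5 := by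
                have he3 : Real.exp 1 ≤ 3 := by
                  have := Real.exp_one_lt_d9; linarith
                nlinarith [Real.exp_pos 1]
              have := Real.add_one_le_exp 1
              have hlog := Real.log_le_log (by positivity) he
              rw [Real.log_mul (Real.exp_ne_zero 1) (ne_of_gt hip),
                Real.log_exp] at hlog
              linarith
            nlinarith
        _ ≤ ∑ i ∈ Finset.range μ, (L - Real.log ((i:ℝ) + 1)) ^ 2 :=
            Finset.sum_le_sum_of_subset_of_nonneg hsub fun i _ _ => sq_nonneg _
    have hkμ : (μ:ℝ) / 4 ≤ (k:ℝ) := by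
      have h1 : 3 * k + 2 ≥ μ := by omega
      have : (μ:ℝ) ≤ 3 * (k:ℝ) + 2 := by exact_mod_cast h1
      linarith
    have hDpos : (0:ℝ) < (μ:ℝ) / 4 := by linarith
    have hD2 : ((μ:ℝ) / 4) ^ 2 ≤ (∑ i : Fin μ, (L - Real.log (((i:ℕ):ℝ) + 1)) ^ 2) ^ 2 := by
      apply pow_le_pow_left₀ (le_of_lt hDpos)
      linarith
    have hmain : (∑ i : Fin μ, (L - Real.log (((i:ℕ):ℝ) + 1)) ^ 4)
        / (∑ i : Fin μ, (L - Real.log (((i:ℕ):ℝ) + 1)) ^ 2) ^ 2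
        ≤ ((μ:ℝ) * L ^ 4) / (((μ:ℝ) / 4) ^ 2) :=
      div_le_div₀ (by positivity) hN (by positivity) hD2
    have hLlog : L ≤ Real.log (2 * (μ:ℝ)) := by
      apply Real.log_le_log (by positivity)
      linarith
    have hL4 : L ^ 4 ≤ Real.log (2 * (μ:ℝ)) ^ 4 := pow_le_pow_left₀ hLnn hLlog 4
    have hfinal : ((μ:ℝ) * L ^ 4) / (((μ:ℝ) / 4) ^ 2)
        ≤ 32 * (Real.log (2 * (μ:ℝ)) ^ 4 / (2 * (μ:ℝ))) := by
      rw [div_le_iff₀ (by positivity)]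
      have hμpos : (0:ℝ) < (μ:ℝ) := by linarith
      have : ((μ:ℝ) * L ^ 4) ≤ (μ:ℝ) * Real.log (2 * (μ:ℝ)) ^ 4 := by
        nlinarith
      calc ((μ:ℝ) * L ^ 4) ≤ (μ:ℝ) * Real.log (2 * (μ:ℝ)) ^ 4 := this
        _ = 32 * (Real.log (2 * (μ:ℝ)) ^ 4 / (2 * (μ:ℝ))) * ((μ:ℝ) / 4) ^ 2 := by
            field_simp; ring
    exact le_trans (le_trans (le_of_eq rfl) hmain) hfinal
end
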